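/- Let m ≥ 2 and let J be a nonempty subset of {1,...,m-1}. Define s_i = t_i q if i ∈ J and s_i = t_i otherwise. Then for n ≥ |J|, H_n(s_1,...,s_{m-1}) = Σ_{i=0}^{|J|} e_i(t_J) (-1)^i ((q)_n/(q)_{n-i}) H_{n-i}(t_1,...,t_{m-1}), where e_i(t_J) is the i-th elementary symmetric polynomial in the variables {t_j : j ∈ J}. -/

import Mathlib

/-- `(q)_n = (1-q)(1-q^2)⋯(1-q^n)`, with `(q)_0 = 1`. -/
noncomputable def qPoch {K : Type*} [Field K] (q : K) (n : ℕ) : K :=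
  ∏ j ∈ Finset.range n, (1 - q ^ (j + 1))

/-- The Rogers-Szegő polynomial in `m-1` variables. -/
noncomputable def rogersSzegoMV {K : Type*} [Field K] (q : K) (m n : ℕ)
    (t : Fin (m - 1) → K) : K :=
  ∑ k ∈ Finset.Nat.antidiagonalTuple m n,
    (qPoch q n / ∏ i, qPoch q (k i)) *
      ∏ i : Fin (m - 1), t i ^ k (Fin.castLE (Nat.sub_le m 1) i)

/-!
Writing `q ^ kᵢ = 1 - (1 - q ^ kᵢ)` and expanding the product over `J` gives
`H_n(s) = Σ_{S ⊆ J} (-1)^|S| Σ_k C(n; k) t^k ∏_{i ∈ S} (1 - q ^ kᵢ)`. The factor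
`1 - q ^ kᵢ` is the top factor of `(q)_{kᵢ}`, and it kills the terms with `kᵢ = 0`; lowering
every `kᵢ` with `i ∈ S` by one thus turns the inner sum into
`(q)_n / (q)_{n-|S|} · t_S · H_{n-|S|}(t)`. Grouping the subsets `S` by size yields `e_i(t_J)`.
-/

open Finset

theorem Finset.prod_eq_sum_powerset_neg_one_pow_mul_prod_one_sub {ι R : Type*} [CommRing R]
    [DecidableEq ι] (s : Finset ι) (x : ι → R) :
    ∏ i ∈ s, x i = ∑ t ∈ s.powerset, (-1) ^ #t * ∏ i ∈ t, (1 - x i) := by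
  simpa only [sub_sub_cancel, prod_const_one, mul_one] using
    prod_sub (fun _ => (1 : R)) (fun i => 1 - x i) s

theorem Finset.sum_powerset_mul_prod_eq_sum_esymm {ι R : Type*} [CommSemiring R]
    (s : Finset ι) (f : ι → R) (g : ℕ → R) :
    ∑ t ∈ s.powerset, g #t * ∏ i ∈ t, f i =
      ∑ i ∈ range (#s + 1), (s.val.map f).esymm i * g i := by
  rw [powerset_card_disjiUnion]
  refine (sum_disjiUnion _ _ _).trans (sum_congr rfl fun i _ => ?_)
  rw [esymm_map_val, sum_mul]
  exact sum_congr rfl fun t ht => by rw [(mem_powersetCard.mp ht).2, mul_comm]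

theorem Finset.Nat.antidiagonalTuple_filter_forall_one_le {m n : ℕ} (T : Finset (Fin m))
    (hT : #T ≤ n) :
    {k ∈ antidiagonalTuple m n | ∀ j ∈ T, 1 ≤ k j} =
      (antidiagonalTuple m (n - #T)).map (addRightEmbedding fun j => if j ∈ T then 1 else 0) := by
  set e : Fin m → ℕ := fun j => if j ∈ T then 1 else 0
  have sum_e : ∑ j, e j = #T := by simp [e]
  ext k
  simp only [mem_filter, mem_map, mem_antidiagonalTuple, addRightEmbedding_apply]
  constructor
  · rintro ⟨hk, hpos⟩
    have hle : e ≤ k := fun j => by by_cases hj : j ∈ T <;> simp [e, hj, hpos]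
    refine ⟨k - e, ?_, tsub_add_cancel_of_le hle⟩
    rw [← hk, ← sum_e, ← sum_tsub_distrib _ fun j _ => hle j]
    rfl
  · rintro ⟨k, hk, rfl⟩
    refine ⟨?_, fun j hj => by simp [e, hj]⟩
    rw [Pi.add_def, sum_add_distrib, hk, sum_e, Nat.sub_add_cancel hT]

theorem prod_pow_add_indicator {ι R : Type*} [Fintype ι] [CommMonoid R] [DecidableEq ι]
    (S : Finset ι) (t : ι → R) (a : ι → ℕ) :
    ∏ i, t i ^ (a i + if i ∈ S then 1 else 0) = (∏ i, t i ^ a i) * ∏ i ∈ S, t i := by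
  simp only [pow_add, prod_mul_distrib, pow_ite, pow_one, pow_zero, prod_ite_mem, univ_inter]

section

variable {K : Type*} [Field K] {m : ℕ}

theorem qPoch_succ (q : K) (k : ℕ) : qPoch q (k + 1) = qPoch q k * (1 - q ^ (k + 1)) :=
  prod_range_succ _ k

theorem qPoch_ne_zero {q : K} (hq : ∀ j, q ^ (j + 1) ≠ 1) (k : ℕ) : qPoch q k ≠ 0 :=
  prod_ne_zero_iff.mpr fun j _ => sub_ne_zero.mpr (hq j).symm

theorem prod_qPoch_add_indicator (q : K) (T : Finset (Fin m)) (k : Fin m → ℕ) :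
    ∏ j, qPoch q (k j + if j ∈ T then 1 else 0) =
      (∏ j, qPoch q (k j)) * ∏ j ∈ T, (1 - q ^ (k j + 1)) := by
  have h : ∀ j, qPoch q (k j + if j ∈ T then 1 else 0) =
      qPoch q (k j) * if j ∈ T then 1 - q ^ (k j + 1) else 1 := by
    intro j
    split_ifs <;> simp [qPoch_succ]
  rw [prod_congr rfl fun j _ => h j, prod_mul_distrib, prod_ite_mem, univ_inter]

noncomputable def rogersSzegoTerm (q : K) (n : ℕ) (t : Fin (m - 1) → K) (k : Fin m → ℕ) : K :=
  (qPoch q n / ∏ i, qPoch q (k i)) * ∏ i : Fin (m - 1), t i ^ k (Fin.castLE (Nat.sub_le m 1) i)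

theorem rogersSzegoMV_eq_sum_rogersSzegoTerm (q : K) (n : ℕ) (t : Fin (m - 1) → K) :
    rogersSzegoMV q m n t = ∑ k ∈ Nat.antidiagonalTuple m n, rogersSzegoTerm q n t k :=
  rfl

theorem rogersSzegoTerm_add_indicator_mul {q : K} (hq : ∀ j, q ^ (j + 1) ≠ 1) (n : ℕ)
    (t : Fin (m - 1) → K) (S : Finset (Fin (m - 1))) (k : Fin m → ℕ) :
    rogersSzegoTerm q n t
          (fun j => k j + if j ∈ S.map (Fin.castLEEmb (Nat.sub_le m 1)) then 1 else 0) *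
        ∏ i ∈ S, (1 - q ^ (k (Fin.castLE (Nat.sub_le m 1) i) + 1)) =
      qPoch q n / qPoch q (n - #S) * (∏ i ∈ S, t i) * rogersSzegoTerm q (n - #S) t k := by
  have hmem : ∀ i, Fin.castLE (Nat.sub_le m 1) i ∈ S.map (Fin.castLEEmb (Nat.sub_le m 1)) ↔
      i ∈ S := fun i => mem_map' _
  have hA : ∏ j, qPoch q (k j) ≠ 0 := prod_ne_zero_iff.mpr fun j _ => qPoch_ne_zero hq _
  have hB : ∏ i ∈ S, (1 - q ^ (k (Fin.castLE (Nat.sub_le m 1) i) + 1)) ≠ 0 :=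
    prod_ne_zero_iff.mpr fun j _ => sub_ne_zero.mpr (hq _).symm
  have hC : qPoch q (n - #S) ≠ 0 := qPoch_ne_zero hq _
  simp only [rogersSzegoTerm, prod_qPoch_add_indicator, prod_map, Fin.coe_castLEEmb, hmem,
    prod_pow_add_indicator]
  field_simp

theorem sum_rogersSzegoTerm_mul_prod_one_sub_pow {q : K} (hq : ∀ j, q ^ (j + 1) ≠ 1)
    {n : ℕ} (t : Fin (m - 1) → K) (S : Finset (Fin (m - 1))) (hS : #S ≤ n) :
    ∑ k ∈ Nat.antidiagonalTuple m n,
        rogersSzegoTerm q n t k * ∏ i ∈ S, (1 - q ^ k (Fin.castLE (Nat.sub_le m 1) i)) =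
      qPoch q n / qPoch q (n - #S) * (∏ i ∈ S, t i) * rogersSzegoMV q m (n - #S) t := by
  set T := S.map (Fin.castLEEmb (Nat.sub_le m 1))
  have hT : #T = #S := card_map _
  have vanish : ∀ k ∈ Nat.antidiagonalTuple m n,
      rogersSzegoTerm q n t k * ∏ i ∈ S, (1 - q ^ k (Fin.castLE (Nat.sub_le m 1) i)) ≠ 0 →
        ∀ j ∈ T, 1 ≤ k j := by
    intro k _ hne j hj
    obtain ⟨i, hi, rfl⟩ := mem_map.mp hj
    by_contra! h0
    have hk : k (Fin.castLE (Nat.sub_le m 1) i) = 0 := by simpa using h0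
    exact hne (mul_eq_zero_of_right _ (prod_eq_zero hi (by simp [hk])))
  rw [← sum_filter_of_ne vanish, Nat.antidiagonalTuple_filter_forall_one_le T (hT ▸ hS), sum_map,
    hT, rogersSzegoMV_eq_sum_rogersSzegoTerm, mul_sum]
  refine sum_congr rfl fun k _ => ?_
  rw [← rogersSzegoTerm_add_indicator_mul hq]
  congr 1
  exact prod_congr rfl fun i hi => by simp [T, hi]

theorem rogersSzegoTerm_scale (q : K) (n : ℕ) (t : Fin (m - 1) → K) (J : Finset (Fin (m - 1)))
    (k : Fin m → ℕ) :
    rogersSzegoTerm q n (fun i => if i ∈ J then t i * q else t i) k =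
      rogersSzegoTerm q n t k * ∏ i ∈ J, q ^ k (Fin.castLE (Nat.sub_le m 1) i) := by
  have h : ∀ i, (if i ∈ J then t i * q else t i) ^ k (Fin.castLE (Nat.sub_le m 1) i) =
      t i ^ k (Fin.castLE (Nat.sub_le m 1) i) *
        if i ∈ J then q ^ k (Fin.castLE (Nat.sub_le m 1) i) else 1 := by
    intro i
    split_ifs <;> simp [mul_pow]
  simp only [rogersSzegoTerm, h, prod_mul_distrib, prod_ite_mem, univ_inter, mul_assoc]

theorem rogersSzegoMV_scale_eq_sum_esymm {q : K} (hq : ∀ j, q ^ (j + 1) ≠ 1) {n : ℕ}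
    (J : Finset (Fin (m - 1))) (hn : #J ≤ n) (t : Fin (m - 1) → K) :
    rogersSzegoMV q m n (fun i => if i ∈ J then t i * q else t i) =
      ∑ i ∈ range (#J + 1), (J.val.map t).esymm i * (-1) ^ i * (qPoch q n / qPoch q (n - i)) *
        rogersSzegoMV q m (n - i) t := by
  calc rogersSzegoMV q m n (fun i => if i ∈ J then t i * q else t i)
      = ∑ S ∈ J.powerset, (-1) ^ #S * ∑ k ∈ Nat.antidiagonalTuple m n,
          rogersSzegoTerm q n t k * ∏ i ∈ S, (1 - q ^ k (Fin.castLE (Nat.sub_le m 1) i)) := by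
        simp only [rogersSzegoMV_eq_sum_rogersSzegoTerm, rogersSzegoTerm_scale, mul_sum]
        rw [sum_comm]
        refine sum_congr rfl fun k _ => ?_
        rw [prod_eq_sum_powerset_neg_one_pow_mul_prod_one_sub, mul_sum]
        exact sum_congr rfl fun S _ => by ring
    _ = ∑ S ∈ J.powerset, ((-1) ^ #S * (qPoch q n / qPoch q (n - #S)) *
          rogersSzegoMV q m (n - #S) t) * ∏ i ∈ S, t i := by
        refine sum_congr rfl fun S hS => ?_
        rw [sum_rogersSzegoTerm_mul_prod_one_sub_pow hq t S
          ((card_le_card (mem_powerset.mp hS)).trans hn)]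
        ring
    _ = _ := by
        refine (sum_powerset_mul_prod_eq_sum_esymm J t
          fun i => (-1) ^ i * (qPoch q n / qPoch q (n - i)) * rogersSzegoMV q m (n - i) t).trans ?_
        simp only [mul_assoc]

end

theorem RatFunc.X_pow_succ_ne_one {K : Type*} [Field K] (j : ℕ) :
    (RatFunc.X : RatFunc K) ^ (j + 1) ≠ 1 := by
  rw [← RatFunc.algebraMap_X, ← map_pow, ← map_one (algebraMap (Polynomial K) (RatFunc K)), Ne,
    (IsFractionRing.injective (Polynomial K) (RatFunc K)).eq_iff]
  intro h
  simpa using congrArg Polynomial.natDegree h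

theorem rogersSzegoMV_q_functional_general (m n : ℕ)
    (J : Finset (Fin (m - 1))) (hn : J.card ≤ n)
    (t : Fin (m - 1) → RatFunc ℚ) :
    rogersSzegoMV (RatFunc.X : RatFunc ℚ) m n
        (fun i => if i ∈ J then t i * RatFunc.X else t i) =
      ∑ i ∈ Finset.range (J.card + 1),
        (Multiset.esymm (J.val.map t) i) * (-1 : RatFunc ℚ) ^ i *
          (qPoch (RatFunc.X : RatFunc ℚ) n / qPoch (RatFunc.X : RatFunc ℚ) (n - i)) *
          rogersSzegoMV (RatFunc.X : RatFunc ℚ) m (n - i) t :=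
  rogersSzegoMV_scale_eq_sum_esymm RatFunc.X_pow_succ_ne_one J hn t

/-- Let `m ≥ 2`, let `J ⊆ {1,…,m-1}` be nonempty, and set `s_i = t_i q` for `i ∈ J`,
`s_i = t_i` otherwise.  Then for `n ≥ |J|`,
`H_n(s_1,…,s_{m-1}) = Σ_{i=0}^{|J|} e_i(t_J) (-1)^i ((q)_n/(q)_{n-i}) H_{n-i}(t_1,…,t_{m-1})`. -/
theorem rogersSzegoMV_q_functional (m n : ℕ) (hm : 2 ≤ m)
    (J : Finset (Fin (m - 1))) (hJ : J.Nonempty) (hn : J.card ≤ n)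
    (t : Fin (m - 1) → RatFunc ℚ) :
    rogersSzegoMV (RatFunc.X : RatFunc ℚ) m n
        (fun i => if i ∈ J then t i * RatFunc.X else t i) =
      ∑ i ∈ Finset.range (J.card + 1),
        (Multiset.esymm (J.val.map t) i) * (-1 : RatFunc ℚ) ^ i *
          (qPoch (RatFunc.X : RatFunc ℚ) n / qPoch (RatFunc.X : RatFunc ℚ) (n - i)) *
          rogersSzegoMV (RatFunc.X : RatFunc ℚ) m (n - i) t :=
  rogersSzegoMV_q_functional_general m n J hn t
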